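/- Suppose p(a,x) = q(a,x) + Σ_j r_j(a,x)^T r_j(a,x) is a noncommutative polynomial such that: (i) each r_j(a,x) is homogeneous of degree one in x; (ii) q(a,x) has degree at most one in x; and (iii) p(a,x) has degree at most two in a. Then each r_j(a,x) has degree at most one in a, and q(a,x) has degree at most two in a. -/

import Mathlib

open scoped BigOperators Kronecker Matrix

namespace NCConvexity

/-! ### Noncommutative polynomials in two classes of `g` letters:
`a`-letters are `Sum.inl i`, `x`-letters are `Sum.inr i`. -/

/-- The alphabet: `g` letters `a` and `g` letters `x`. -/
abbrev L2 (g : ℕ) := Sum (Fin g) (Fin g)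

/-- Words in the letters `(a, x)`. -/
abbrev Word2 (g : ℕ) := FreeMonoid (L2 g)

/-- The free algebra `ℝ⟨a,x⟩` of noncommutative polynomials in the `2g` letters. -/
abbrev NC2 (g : ℕ) := MonoidAlgebra ℝ (Word2 g)

variable {g : ℕ}

/-- Number of `x`-letters in a list of letters. -/
def xCountL (w : List (L2 g)) : ℕ := w.countP (fun l => l.isRight)

/-- Number of `a`-letters in a list of letters. -/
def aCountL (w : List (L2 g)) : ℕ := w.countP (fun l => l.isLeft)

/-- Number of `x`-letters in a word. -/
def xCount (w : Word2 g) : ℕ := xCountL (FreeMonoid.toList w)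

/-- Number of `a`-letters in a word. -/
def aCount (w : Word2 g) : ℕ := aCountL (FreeMonoid.toList w)

/-- `p` has degree at most `k` in `x`. -/
def xDegLe (p : NC2 g) (k : ℕ) : Prop := ∀ w ∈ p.coeff.support, xCount w ≤ k

/-- `p` has degree at most `k` in `a`. -/
def aDegLe (p : NC2 g) (k : ℕ) : Prop := ∀ w ∈ p.coeff.support, aCount w ≤ k

/-- `p` is homogeneous of degree `k` in `x`. -/
def xHomog (p : NC2 g) (k : ℕ) : Prop := ∀ w ∈ p.coeff.support, xCount w = k

/-- `p` is homogeneous of degree `k` in `a`. -/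
def aHomog (p : NC2 g) (k : ℕ) : Prop := ∀ w ∈ p.coeff.support, aCount w = k

/-- The degree of `p` in `x`. -/
noncomputable def xDegree (p : NC2 g) : ℕ := p.coeff.support.sup xCount

/-- The degree of `p` in `a`. -/
noncomputable def aDegree (p : NC2 g) : ℕ := p.coeff.support.sup aCount

/-- `p` is a polynomial in the letters `a` alone (no `x`-letters occur). -/
def inAOnly (p : NC2 g) : Prop := ∀ w ∈ p.coeff.support, xCount w = 0

/-- The transpose (reversal) involution on `ℝ⟨a,x⟩`. -/
noncomputable def ncT (p : NC2 g) : NC2 g :=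
  MonoidAlgebra.mapDomain (fun w : Word2 g => FreeMonoid.ofList (FreeMonoid.toList w).reverse) p

/-- `p` is a symmetric polynomial. -/
def IsSymPoly (p : NC2 g) : Prop := ncT p = p

/-- A letter, as an element of `ℝ⟨a,x⟩`. -/
noncomputable def ltr (l : L2 g) : NC2 g := MonoidAlgebra.of ℝ (Word2 g) (FreeMonoid.of l)

/-- Evaluation of a list of letters at a pair of `g`-tuples of matrices. -/
def listEval {m : Type} [Fintype m] [DecidableEq m]
    (w : List (L2 g)) (A X : Fin g → Matrix m m ℝ) : Matrix m m ℝ :=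
  (w.map (Sum.elim A X)).prod

/-- Evaluation of a word at a pair of `g`-tuples of matrices. -/
def wordEval {m : Type} [Fintype m] [DecidableEq m]
    (w : Word2 g) (A X : Fin g → Matrix m m ℝ) : Matrix m m ℝ :=
  listEval (FreeMonoid.toList w) A X

/-- Evaluation of a polynomial `p(a,x)` at a pair of `g`-tuples of matrices:
substitute `A i` for `a_i` and `X i` for `x_i`. -/
noncomputable def eval {m : Type} [Fintype m] [DecidableEq m]
    (p : NC2 g) (A X : Fin g → Matrix m m ℝ) : Matrix m m ℝ :=
  Finsupp.sum p.coeff (fun w c => c • wordEval w A X)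

/-- A `g`-tuple of `n × n` real matrices. -/
abbrev MatTuple (g n : ℕ) := Fin g → Matrix (Fin n) (Fin n) ℝ

/-- A tuple of symmetric matrices, i.e. an element of `S_n(ℝ^g)`. -/
def IsSymTuple {m : Type} (A : Fin g → Matrix m m ℝ) : Prop := ∀ i, (A i).IsSymm

/-- Convex combination `t X + (1-t) Y` of two tuples. -/
noncomputable def cvx {m : Type} (t : ℝ) (X Y : Fin g → Matrix m m ℝ) :
    Fin g → Matrix m m ℝ := fun i => t • X i + (1 - t) • Y i

/-- Direct sum of two square matrices. -/
noncomputable def dirSum {n m : ℕ} (M : Matrix (Fin n) (Fin n) ℝ) (N : Matrix (Fin m) (Fin m) ℝ) :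
    Matrix (Fin (n + m)) (Fin (n + m)) ℝ :=
  Matrix.reindex finSumFinEquiv finSumFinEquiv (Matrix.fromBlocks M 0 0 N)

/-- Direct sum of two tuples of matrices. -/
noncomputable def tupDirSum {n m : ℕ} (A : MatTuple g n) (B : MatTuple g m) :
    MatTuple g (n + m) := fun i => dirSum (A i) (B i)

/-- The partial Hessian of `p` in `x` at `(A, X)` in the direction `H`: the second derivative
at `t = 0` of `t ↦ p(A, X + tH)` (computed entrywise). -/
noncomputable def hess {m : Type} [Fintype m] [DecidableEq m]
    (p : NC2 g) (A X H : Fin g → Matrix m m ℝ) : Matrix m m ℝ :=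
  Matrix.of fun i j =>
    iteratedDeriv 2 (fun t : ℝ => eval p A (fun k => X k + t • H k) i j) 0

/-- Evaluation of a matrix with entries in `ℝ⟨a,x⟩`, as one big block matrix. -/
noncomputable def evalMat {ι : Type} {m : Type} [Fintype m] [DecidableEq m]
    (Z : Matrix ι ι (NC2 g)) (A X : Fin g → Matrix m m ℝ) : Matrix (ι × m) (ι × m) ℝ :=
  Matrix.of fun pr qr => eval (Z pr.1 qr.1) A X pr.2 qr.2

/-- A matrix of polynomials which is symmetric with respect to the transpose involution. -/
def SymPolyMat {ι : Type} (Z : Matrix ι ι (NC2 g)) : Prop := ∀ i j, ncT (Z i j) = Z j i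

/-- `N(g,d) = Σ_{j=0}^d g^j`. -/
def Ngd (g d : ℕ) : ℕ := ∑ j ∈ Finset.range (d + 1), g ^ j

/-! ### Noncommutative polynomials in a single class of `g` letters. -/

abbrev Word1 (g : ℕ) := FreeMonoid (Fin g)

/-- Noncommutative polynomials in `g` letters. -/
abbrev NC1 (g : ℕ) := MonoidAlgebra ℝ (Word1 g)

/-- Evaluation at a `g`-tuple of matrices. -/
noncomputable def eval1 {m : Type} [Fintype m] [DecidableEq m]
    (p : NC1 g) (A : Fin g → Matrix m m ℝ) : Matrix m m ℝ :=
  Finsupp.sum p.coeff (fun w c => c • ((FreeMonoid.toList w).map A).prod)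

/-- The degree of a polynomial in `g` letters. -/
noncomputable def degree1 (p : NC1 g) : ℕ :=
  p.coeff.support.sup (fun w => (FreeMonoid.toList w).length)

/-! ### Noncommutative polynomials in three classes of `g` letters `(a, x, h)`. -/

abbrev L3 (g : ℕ) := Sum (Fin g) (Sum (Fin g) (Fin g))
abbrev Word3 (g : ℕ) := FreeMonoid (L3 g)

/-- The free algebra `ℝ⟨a,x,h⟩`. -/
abbrev NC3 (g : ℕ) := MonoidAlgebra ℝ (Word3 g)

def hCount3 (w : Word3 g) : ℕ :=
  (FreeMonoid.toList w).countP (fun l => match l with | .inr (.inr _) => true | _ => false)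

def xCount3 (w : Word3 g) : ℕ :=
  (FreeMonoid.toList w).countP (fun l => match l with | .inr (.inl _) => true | _ => false)

def aCount3 (w : Word3 g) : ℕ :=
  (FreeMonoid.toList w).countP (fun l => match l with | .inl _ => true | _ => false)

noncomputable def xDegree3 (q : NC3 g) : ℕ := q.coeff.support.sup xCount3
noncomputable def aDegree3 (q : NC3 g) : ℕ := q.coeff.support.sup aCount3

/-- homogeneous of degree `k` in `h` -/
def hHomog3 (q : NC3 g) (k : ℕ) : Prop := ∀ w ∈ q.coeff.support, hCount3 w = k

/-- The transpose (reversal) involution on `ℝ⟨a,x,h⟩`. -/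
noncomputable def ncT3 (q : NC3 g) : NC3 g :=
  MonoidAlgebra.mapDomain (fun w : Word3 g => FreeMonoid.ofList (FreeMonoid.toList w).reverse) q

def IsSymPoly3 (q : NC3 g) : Prop := ncT3 q = q

noncomputable def ltr3 (l : L3 g) : NC3 g := MonoidAlgebra.of ℝ (Word3 g) (FreeMonoid.of l)

/-- The embedding `ℝ⟨a,x⟩ → ℝ⟨a,x,h⟩`. -/
noncomputable def emb23 {g : ℕ} : NC2 g →ₐ[ℝ] NC3 g :=
  MonoidAlgebra.lift ℝ (NC3 g) (Word2 g)
    (FreeMonoid.lift (fun l => ltr3 (Sum.map id Sum.inl l)))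

/-- The substitution `a_i ↦ a_i`, `x_i ↦ x_i + t·h_i`, landing in polynomials in a central
variable `t` over `ℝ⟨a,x,h⟩`. -/
noncomputable def hessSubst {g : ℕ} : NC2 g →ₐ[ℝ] Polynomial (NC3 g) :=
  MonoidAlgebra.lift ℝ (Polynomial (NC3 g)) (Word2 g)
    (FreeMonoid.lift (fun l => match l with
      | Sum.inl i => Polynomial.C (ltr3 (Sum.inl i))
      | Sum.inr i => Polynomial.C (ltr3 (Sum.inr (Sum.inl i)))
          + Polynomial.X * Polynomial.C (ltr3 (Sum.inr (Sum.inr i)))))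

/-- The partial Hessian of `p(a,x)` with respect to `x`, as the polynomial
`p''_{xx}(a,x)[h]` in the letters `(a,x,h)`: the second derivative at `t = 0` of
`t ↦ p(a, x + t h)`, i.e. twice the coefficient of `t²`. -/
noncomputable def hessPoly (p : NC2 g) : NC3 g :=
  2 • Polynomial.coeff (hessSubst p) 2

/-- The substitution sending every `x`-letter to `0` (and fixing the `a`-letters). -/
noncomputable def killX {g : ℕ} : NC2 g →ₐ[ℝ] NC2 g :=
  MonoidAlgebra.lift ℝ (NC2 g) (Word2 g)
    (FreeMonoid.lift (fun l => match l with
      | Sum.inl i => ltr (Sum.inl i)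
      | Sum.inr _ => 0))

/-- The border monomial `h_j · m(a,x)`. -/
noncomputable def bmon (j : Fin g) (w : List (L2 g)) : NC3 g :=
  MonoidAlgebra.of ℝ (Word3 g)
    (FreeMonoid.ofList (Sum.inr (Sum.inr j) :: w.map (Sum.map id Sum.inl)))

lemma countL_split (w : List (L2 g)) : xCountL w + aCountL w = w.length := by
  induction w with
  | nil => rfl
  | cons hd tl ih =>
    cases hd <;> simp [xCountL, aCountL, List.countP_cons] at * <;> omega

/-- The words indexing the border vector: at most `m` `x`-letters and at most `d` `a`-letters. -/
abbrev BWords (g m d : ℕ) := {w : List (L2 g) // xCountL w ≤ m ∧ aCountL w ≤ d}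

noncomputable instance bwordsFintype (g m d : ℕ) : Fintype (BWords g m d) :=
  Fintype.ofInjective
    (fun w => fun i : Fin (m + d) => w.1[(i : ℕ)]?)
    (by
      rintro ⟨a, ha1, ha2⟩ ⟨b, hb1, hb2⟩ h
      have hla : a.length ≤ m + d := by have := countL_split a; omega
      have hlb : b.length ≤ m + d := by have := countL_split b; omega
      apply Subtype.ext
      apply List.ext_getElem?
      intro i
      by_cases hi : i < m + d
      · exact congrFun h ⟨i, hi⟩
      · rw [List.getElem?_eq_none (le_trans hla (le_of_not_gt hi)),
          List.getElem?_eq_none (le_trans hlb (le_of_not_gt hi))])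

/-- The index of the border vector: a direction `h_j` together with a word `m(a,x)`. -/
abbrev BIdx (g m d : ℕ) := Fin g × BWords g m d

/-- The border vector `V(a,x)[h]`, whose entries are the monomials `h_j · m(a,x)` with
`m` a word having at most `m` `x`-letters and at most `d` `a`-letters. -/
noncomputable def borderVec (g m d : ℕ) : BIdx g m d → NC3 g :=
  fun jw => bmon jw.1 jw.2.1

/-- The number of positive eigenvalues (with multiplicity) of a real symmetric matrix. -/
noncomputable def posEig {m : Type} [Fintype m] [DecidableEq m] (M : Matrix m m ℝ) : ℕ :=
  if h : M.IsHermitian then (Finset.univ.filter (fun i => 0 < h.eigenvalues i)).card else 0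

/-- The number of negative eigenvalues (with multiplicity) of a real symmetric matrix. -/
noncomputable def negEig {m : Type} [Fintype m] [DecidableEq m] (M : Matrix m m ℝ) : ℕ :=
  if h : M.IsHermitian then (Finset.univ.filter (fun i => h.eigenvalues i < 0)).card else 0

/-- A sum-and-difference-of-squares decomposition of `q` with `σ` positive and `τ`
negative squares, with all factors linear in `h`. -/
def IsSDS (q : NC3 g) (σ τ : ℕ) : Prop :=
  ∃ (f : Fin σ → NC3 g) (r : Fin τ → NC3 g),
    (∀ j, hHomog3 (f j) 1) ∧ (∀ l, hHomog3 (r l) 1) ∧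
    q = (∑ j, ncT3 (f j) * f j) - ∑ l, ncT3 (r l) * r l

/-- `σ₊(q)`: the minimal number of positive squares in an SDS decomposition of `q`. -/
noncomputable def sigmaPlus (q : NC3 g) : ℕ := sInf {σ | ∃ τ, IsSDS q σ τ}

/-- `σ₋(q)`: the minimal number of negative squares in an SDS decomposition of `q`. -/
noncomputable def sigmaMinus (q : NC3 g) : ℕ := sInf {τ | ∃ σ, IsSDS q σ τ}

/-- The monomials `a_i x_j` (for `false`) and `x_j a_i` (for `true`). -/
noncomputable def Vmono (g : ℕ) : Bool × Fin g × Fin g → NC2 g :=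
  fun m => match m with
  | (false, i, j) => MonoidAlgebra.of ℝ (Word2 g) (FreeMonoid.ofList [Sum.inl i, Sum.inr j])
  | (true, i, j) => MonoidAlgebra.of ℝ (Word2 g) (FreeMonoid.ofList [Sum.inr j, Sum.inl i])

/-- The vector `W(x)` with entries `1, x_1, …, x_g`. -/
noncomputable def Wmono (g : ℕ) : Option (Fin g) → NC2 g :=
  fun o => match o with
  | none => 1
  | some i => ltr (Sum.inr i)

/-- The subspace of symmetric `n × n` matrices. -/
def symmSub (n : ℕ) : Submodule ℝ (Matrix (Fin n) (Fin n) ℝ) where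
  carrier := {H | H.IsSymm}
  add_mem' := fun ha hb => ha.add hb
  zero_mem' := Matrix.isSymm_zero
  smul_mem' := fun c _ ha => ha.smul c

/-- The linear map `H ↦ (H z_1, …, H z_d)`. -/
noncomputable def stackMap (n d : ℕ) (z : Fin d → Fin n → ℝ) :
    Matrix (Fin n) (Fin n) ℝ →ₗ[ℝ] (Fin d → Fin n → ℝ) where
  toFun H := fun j => H.mulVec (z j)
  map_add' := fun H K => by funext j; simp [Matrix.add_mulVec]
  map_smul' := fun c H => by funext j; simp [Matrix.smul_mulVec]

/-- The linear map `H ↦ ⊕_j (H_j z_1, …, H_j z_d)`. -/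
noncomputable def stackMapG (g n d : ℕ) (z : Fin d → Fin n → ℝ) :
    (Fin g → Matrix (Fin n) (Fin n) ℝ) →ₗ[ℝ] (Fin g → Fin d → Fin n → ℝ) where
  toFun H := fun j i => (H j).mulVec (z i)
  map_add' := fun H K => by funext j i; simp [Matrix.add_mulVec]
  map_smul' := fun c H => by funext j i; simp [Matrix.smul_mulVec]

end NCConvexity


theorem FreeMonoid.eq_and_eq_of_reverse_mul_eq_reverse_mul_self {α : Type*}
    {u v w : FreeMonoid α} (hu : u.length ≤ w.length) (hv : v.length ≤ w.length)
    (h : u.reverse * v = w.reverse * w) : u = w ∧ v = w := by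
  have hsum := congrArg FreeMonoid.length h
  simp only [FreeMonoid.length_mul, FreeMonoid.length_reverse] at hsum
  have hlen : (FreeMonoid.toList u).reverse.length = (FreeMonoid.toList w).reverse.length := by
    simp only [List.length_reverse]
    exact (show u.length = w.length by omega)
  obtain ⟨hrev, rfl⟩ := List.append_inj (congrArg FreeMonoid.toList h) hlen
  exact ⟨FreeMonoid.toList.injective (List.reverse_injective hrev), rfl⟩

namespace NCConvexity

variable {g : ℕ}

lemma aCount_mul (u v : Word2 g) : aCount (u * v) = aCount u + aCount v :=
  List.countP_append ..

lemma xCount_mul (u v : Word2 g) : xCount (u * v) = xCount u + xCount v :=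
  List.countP_append ..

lemma aCount_reverse (u : Word2 g) : aCount u.reverse = aCount u :=
  List.countP_reverse ..

lemma xCount_reverse (u : Word2 g) : xCount u.reverse = xCount u :=
  List.countP_reverse ..

lemma length_eq_xCount_add_aCount (w : Word2 g) : w.length = xCount w + aCount w :=
  (countL_split _).symm

lemma coeff_eq_zero_of_aDegLe {p : NC2 g} {n : ℕ} (hp : aDegLe p n) {w : Word2 g}
    (hw : n < aCount w) : p.coeff w = 0 :=
  Finsupp.notMem_support_iff.mp fun hmem => hw.not_ge (hp w hmem)

lemma coeff_eq_zero_of_xDegLe {p : NC2 g} {n : ℕ} (hp : xDegLe p n) {w : Word2 g}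
    (hw : n < xCount w) : p.coeff w = 0 :=
  Finsupp.notMem_support_iff.mp fun hmem => hw.not_ge (hp w hmem)

lemma coeff_add_sum {ι : Type*} (s : Finset ι) (q : NC2 g) (f : ι → NC2 g) (w : Word2 g) :
    (q + ∑ i ∈ s, f i).coeff w = q.coeff w + ∑ i ∈ s, (f i).coeff w := by
  rw [MonoidAlgebra.coeff_add, Finsupp.add_apply, MonoidAlgebra.coeff_sum, Finset.sum_apply']

lemma ncT_eq_mapDomain_reverse (p : NC2 g) : ncT p = MonoidAlgebra.mapDomain FreeMonoid.reverse p :=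
  rfl

lemma coeff_ncT_mul [DecidableEq (Word2 g)] (f h : NC2 g) (w : Word2 g) :
    (ncT f * h).coeff w = f.coeff.sum fun u b => h.coeff.sum fun v c =>
      if u.reverse * v = w then b * c else 0 := by
  rw [ncT_eq_mapDomain_reverse, MonoidAlgebra.coeff_mul, MonoidAlgebra.coeff_mapDomain]
  refine Finsupp.sum_mapDomain_index (fun u => by simp) (fun u b₁ b₂ => ?_)
  rw [← Finsupp.sum_add]
  congr 1; funext v c; split <;> simp [add_mul]

lemma aDegLe_ncT_mul {f h : NC2 g} {m n : ℕ} (hf : aDegLe f m) (hh : aDegLe h n) :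
    aDegLe (ncT f * h) (m + n) := by
  classical
  intro w hw
  obtain ⟨u', hu', v, hv, rfl⟩ := Finset.mem_mul.mp (MonoidAlgebra.support_coeff_mul_subset _ _ hw)
  obtain ⟨u, hu, rfl⟩ := Finset.mem_image.mp (Finsupp.mapDomain_support hu')
  change aCount (u.reverse * v) ≤ m + n
  rw [aCount_mul, aCount_reverse]
  exact add_le_add (hf u hu) (hh v hv)

lemma coeff_ncT_mul_self_reverse_mul_self (r : NC2 g) {w : Word2 g}
    (hr : ∀ u ∈ r.coeff.support, u.length ≤ w.length) :
    (ncT r * r).coeff (w.reverse * w) = r.coeff w ^ 2 := by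
  classical
  calc (ncT r * r).coeff (w.reverse * w)
      = r.coeff.sum fun u b => r.coeff.sum fun v c =>
          (if u = w then b else 0) * (if v = w then c else 0) := by
        rw [coeff_ncT_mul]
        refine Finsupp.sum_congr fun u hu => Finsupp.sum_congr fun v hv => ?_
        by_cases h : u.reverse * v = w.reverse * w
        · obtain ⟨rfl, rfl⟩ :=
            FreeMonoid.eq_and_eq_of_reverse_mul_eq_reverse_mul_self (hr u hu) (hr v hv) h
          simp
        · have hne : ¬(u = w ∧ v = w) := fun ⟨hu, hv⟩ => h (by rw [hu, hv])
          rw [if_neg h]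
          split_ifs <;> simp_all
    _ = r.coeff w ^ 2 := by
        simp only [← Finsupp.mul_sum, ← Finsupp.sum_mul, Finsupp.sum_ite_self_eq', sq]

/- Take a word `w` of maximal `a`-degree `D` among all words of the `r j`. The coefficient of
`wᵀw` in `Σ_j (r j)ᵀ(r j)` is the sum of squares `Σ_j (r j)_w ^ 2`. If `D ≥ 2`, then `wᵀw` has
`2D > 2` letters `a` and two letters `x`, so it occurs neither in `p` nor in `q`, and all these
coefficients vanish. -/
theorem aDegLe_one_of_aDegLe_add_sum_ncT_mul_self {k : ℕ} {q : NC2 g} {r : Fin k → NC2 g}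
    (hr : ∀ j, xHomog (r j) 1) (hq : xDegLe q 1)
    (hpa : aDegLe (q + ∑ j, ncT (r j) * r j) 2) (j : Fin k) : aDegLe (r j) 1 := by
  intro w₀ hw₀
  by_contra! hw₀a
  obtain ⟨⟨j₁, w⟩, hmem, hmax⟩ := (Finset.univ.sigma fun j => (r j).coeff.support).exists_max_image
    (fun jw => aCount jw.2) ⟨⟨j, w₀⟩, by simpa using hw₀⟩
  simp only [Finset.mem_sigma, Finset.mem_univ, true_and, Sigma.forall] at hmem hmax
  have hxw : xCount w = 1 := hr j₁ w hmem
  have hlen : ∀ i, ∀ u ∈ (r i).coeff.support, u.length ≤ w.length := fun i u hu => by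
    rw [length_eq_xCount_add_aCount, length_eq_xCount_add_aCount, hr i u hu, hxw]
    exact Nat.add_le_add_left (hmax i u hu) 1
  have hsq : ∑ i, (r i).coeff w ^ 2 = 0 := by
    have hp := coeff_eq_zero_of_aDegLe hpa (w := w.reverse * w)
      (by rw [aCount_mul, aCount_reverse]; have := hmax j w₀ hw₀; omega)
    have hqw := coeff_eq_zero_of_xDegLe hq (w := w.reverse * w)
      (by rw [xCount_mul, xCount_reverse, hxw]; norm_num)
    rw [coeff_add_sum, hqw, zero_add] at hp
    simpa only [coeff_ncT_mul_self_reverse_mul_self _ (hlen _ · ·)] using hp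
  have hw : (r j₁).coeff w ^ 2 = 0 :=
    (Finset.sum_eq_zero_iff_of_nonneg fun i _ => sq_nonneg _).mp hsq j₁ (Finset.mem_univ _)
  exact Finsupp.mem_support_iff.mp hmem (pow_eq_zero_iff two_ne_zero |>.mp hw)

end NCConvexity

open NCConvexity

theorem statement11_general (g : ℕ) (k : ℕ)
    (p q : NC2 g) (r : Fin k → NC2 g)
    (hpq : p = q + ∑ j, ncT (r j) * r j)
    (hr : ∀ j, xHomog (r j) 1)
    (hq : xDegLe q 1)
    (hpa : aDegLe p 2) :
    (∀ j, aDegLe (r j) 1) ∧ aDegLe q 2 := by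
  subst hpq
  have hr₁ : ∀ j, aDegLe (r j) 1 := aDegLe_one_of_aDegLe_add_sum_ncT_mul_self hr hq hpa
  refine ⟨hr₁, fun w hw => ?_⟩
  by_contra! hwa
  have hp := coeff_eq_zero_of_aDegLe hpa hwa
  rw [coeff_add_sum, Finset.sum_eq_zero fun j _ =>
    coeff_eq_zero_of_aDegLe (aDegLe_ncT_mul (hr₁ j) (hr₁ j)) hwa, add_zero] at hp
  exact Finsupp.mem_support_iff.mp hw hp

/-- if `p = q + Σ r_jᵀ r_j` with each `r_j` homogeneous of degree one in `x`,
`q` of degree at most one in `x`, and `p` of degree at most two in `a`, then each `r_j` has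
degree at most one in `a` and `q` has degree at most two in `a`. -/
theorem statement11 (g : ℕ) (hg : 1 ≤ g) (k : ℕ)
    (p q : NC2 g) (r : Fin k → NC2 g)
    (hpq : p = q + ∑ j, ncT (r j) * r j)
    (hr : ∀ j, xHomog (r j) 1)
    (hq : xDegLe q 1)
    (hpa : aDegLe p 2) :
    (∀ j, aDegLe (r j) 1) ∧ aDegLe q 2 :=
  statement11_general g k p q r hpq hr hq hpa
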